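/- Let P ⊂ [0,1]² with #P = n, let s > 7/4, and suppose the measure μ_P^s (density n^{−1} n^{2/s} Σ_{p∈P} 𝟙_{B(p, n^{−1/s})}) satisfies (μ_P^s × μ_P^s × μ_P^s){(x¹,x²,x³) : t_{ij} ≤ |x^i−x^j| ≤ t_{ij}+ε for all i<j} ≤ C ε³ for all t and all ε ∈ (0,1]. Then for every triple t, the number of triples (p¹,p²,p³) ∈ P³ with t_{ij} − n^{−1/s} ≤ |p^i − p^j| ≤ t_{ij} + n^{−1/s} for all i<j is at most C' n^{3 − 3/s}. -/

import Mathlib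

open MeasureTheory Real Classical
open scoped ENNReal

open Set Metric

/-!
Put `r = n^(-1/s)`, so that `μ = c • ∑ₚ volume|B(p, r)` with `c = n^(2/s - 1)` and every ball
carries mass `π / n`. If the side lengths of `q ∈ P³` are within `r` of `t`, then moving each
vertex by less than `r` keeps them within `3r` of `t`, so the box `B(q₁, r) × B(q₂, r) × B(q₃, r)`
lies in the set `S` of triples with side lengths within `3r` of `t`. Since the density of `μ³` is
`c³` times the number of boxes containing a point, `μ³ S ≥ #Q (π / n)³`. On the other hand `S` is
covered by `6³` sets on which each side length ranges over an interval of length `r`, so the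
hypothesis at `ε = r` gives `μ³ S ≤ 216 C r³`. Hence `#Q ≤ 216 C π⁻³ n³ r³ = 216 C π⁻³ n^(3 - 3/s)`.
-/

lemma Icc_subset_iUnion_Icc_fin {a ε : ℝ} (hε : 0 < ε) {m : ℕ} (hm : 0 < m) :
    Icc a (a + m * ε) ⊆ ⋃ k : Fin m, Icc (a + k * ε) (a + k * ε + ε) := by
  intro d ⟨had, hdb⟩
  set u := (d - a) / ε
  have hu0 : 0 ≤ u := div_nonneg (by linarith) hε.le
  have hum : u ≤ m := by rw [div_le_iff₀ hε]; linarith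
  refine mem_iUnion.2 ⟨⟨min (m - 1) ⌊u⌋₊, by omega⟩, ?_, ?_⟩
  · have hk : ((min (m - 1) ⌊u⌋₊ : ℕ) : ℝ) ≤ u :=
      (Nat.cast_le.2 (min_le_right _ _)).trans (Nat.floor_le hu0)
    have := (le_div_iff₀ hε).1 hk
    dsimp only
    linarith
  · have hk : u ≤ ((min (m - 1) ⌊u⌋₊ : ℕ) : ℝ) + 1 := by
      rcases le_total ⌊u⌋₊ (m - 1) with h | h
      · rw [min_eq_right h]; exact (Nat.lt_floor_add_one u).le
      · rw [min_eq_left h, Nat.cast_sub hm]; push_cast; linarith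
    have := (div_le_iff₀ hε).1 hk
    dsimp only
    linarith

lemma measure_preimage_Icc_prod_le {X : Type*} [MeasurableSpace X] (ν : Measure X)
    (g : X → ℝ × ℝ × ℝ) {C ε : ℝ} (hε : 0 < ε)
    (hν : ∀ a b c, ν (g ⁻¹' (Icc a (a + ε) ×ˢ Icc b (b + ε) ×ˢ Icc c (c + ε)))
      ≤ ENNReal.ofReal (C * ε ^ 3))
    {m : ℕ} (hm : 0 < m) (a b c : ℝ) :
    ν (g ⁻¹' (Icc (a - m * ε) (a + m * ε) ×ˢ Icc (b - m * ε) (b + m * ε) ×ˢ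
        Icc (c - m * ε) (c + m * ε))) ≤ (2 * m) ^ 3 * ENNReal.ofReal (C * ε ^ 3) := by
  set I : ℝ → Fin (2 * m) → Set ℝ := fun a k => Icc (a - m * ε + k * ε) (a - m * ε + k * ε + ε)
  have hI : ∀ a, Icc (a - m * ε) (a + m * ε) ⊆ ⋃ k, I a k := fun a => by
    convert Icc_subset_iUnion_Icc_fin (a := a - m * ε) hε (m := 2 * m) (by omega) using 2
    push_cast
    ring
  have hcover : g ⁻¹' (Icc (a - m * ε) (a + m * ε) ×ˢ Icc (b - m * ε) (b + m * ε) ×ˢ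
      Icc (c - m * ε) (c + m * ε)) ⊆ ⋃ k : Fin (2 * m) × Fin (2 * m) × Fin (2 * m),
        g ⁻¹' (I a k.1 ×ˢ I b k.2.1 ×ˢ I c k.2.2) := by
    intro x ⟨h₁, h₂, h₃⟩
    obtain ⟨k₁, hk₁⟩ := mem_iUnion.1 (hI a h₁)
    obtain ⟨k₂, hk₂⟩ := mem_iUnion.1 (hI b h₂)
    obtain ⟨k₃, hk₃⟩ := mem_iUnion.1 (hI c h₃)
    exact mem_iUnion.2 ⟨(k₁, k₂, k₃), hk₁, hk₂, hk₃⟩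
  calc _ ≤ ∑ k : Fin (2 * m) × Fin (2 * m) × Fin (2 * m),
        ν (g ⁻¹' (I a k.1 ×ˢ I b k.2.1 ×ˢ I c k.2.2)) :=
        (measure_mono hcover).trans (measure_iUnion_fintype_le _ _)
    _ ≤ ∑ _k : Fin (2 * m) × Fin (2 * m) × Fin (2 * m), ENNReal.ofReal (C * ε ^ 3) :=
        Finset.sum_le_sum fun k _ => hν _ _ _
    _ = (2 * m) ^ 3 * ENNReal.ofReal (C * ε ^ 3) := by
        simp only [Finset.sum_const, Finset.card_univ, Fintype.card_prod, Fintype.card_fin,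
          nsmul_eq_mul]
        push_cast
        ring

section SideLengths

variable {E : Type*} [PseudoMetricSpace E]

def sideLengths (x : E × E × E) : ℝ × ℝ × ℝ :=
  (dist x.1 x.2.1, dist x.1 x.2.2, dist x.2.1 x.2.2)

lemma dist_mem_Icc_of_mem_ball {p q x y : E} {t r : ℝ}
    (h : dist p q ∈ Icc (t - r) (t + r)) (hx : x ∈ ball p r) (hy : y ∈ ball q r) :
    dist x y ∈ Icc (t - 3 * r) (t + 3 * r) := by
  have := abs_le.1 (dist_dist_dist_le x y p q)
  rw [mem_ball] at hx hy
  constructor <;> linarith [h.1, h.2, this.1, this.2]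

lemma sideLengths_mem_of_mem_ball {q x : E × E × E} {t₁ t₂ t₃ r : ℝ}
    (hq : sideLengths q ∈ Icc (t₁ - r) (t₁ + r) ×ˢ Icc (t₂ - r) (t₂ + r) ×ˢ Icc (t₃ - r) (t₃ + r))
    (hx : x ∈ ball q.1 r ×ˢ ball q.2.1 r ×ˢ ball q.2.2 r) :
    sideLengths x ∈ Icc (t₁ - 3 * r) (t₁ + 3 * r) ×ˢ Icc (t₂ - 3 * r) (t₂ + 3 * r) ×ˢ
      Icc (t₃ - 3 * r) (t₃ + 3 * r) :=
  ⟨dist_mem_Icc_of_mem_ball hq.1 hx.1 hx.2.1, dist_mem_Icc_of_mem_ball hq.2.1 hx.1 hx.2.2,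
    dist_mem_Icc_of_mem_ball hq.2.2 hx.2.1 hx.2.2⟩

end SideLengths

lemma ofReal_mul_sum_indicator {X ι : Type*} {a : ℝ} (ha : 0 ≤ a) (U : ι → Set X) (P : Finset ι)
    (z : X) :
    ENNReal.ofReal (a * ∑ p ∈ P, (U p).indicator (fun _ => (1 : ℝ)) z) =
      ENNReal.ofReal a * ∑ p ∈ P, (U p).indicator 1 z := by
  rw [ENNReal.ofReal_mul ha,
    ENNReal.ofReal_sum_of_nonneg fun p _ => indicator_nonneg (fun _ _ => zero_le_one) _]
  congr 1
  refine Finset.sum_congr rfl fun p _ => ?_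
  by_cases h : z ∈ U p <;> simp [h]

lemma sum_indicator_one_mul_sum_indicator_one {X ι : Type*} (U : ι → Set X) (P : Finset ι)
    (x : X × X × X) :
    (∑ p ∈ P, (U p).indicator (1 : X → ℝ≥0∞) x.1) *
        ((∑ p ∈ P, (U p).indicator 1 x.2.1) * ∑ p ∈ P, (U p).indicator 1 x.2.2) =
      ∑ q ∈ P ×ˢ P ×ˢ P, (U q.1 ×ˢ U q.2.1 ×ˢ U q.2.2).indicator 1 x := by
  obtain ⟨x₁, x₂, x₃⟩ := x
  rw [Finset.sum_mul_sum, Finset.sum_mul_sum]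
  simp only [Finset.mul_sum, Finset.sum_product, indicator_prod_one]

lemma sum_le_withDensity_prod_prod {X ι : Type*} [MeasurableSpace X] (ν : Measure X) [SFinite ν]
    {U : ι → Set X} (hU : ∀ i, MeasurableSet (U i)) (c : ℝ≥0∞) (P : Finset ι)
    {Q : Finset (ι × ι × ι)} (hQ : Q ⊆ P ×ˢ P ×ˢ P) {S : Set (X × X × X)}
    (hS : ∀ q ∈ Q, U q.1 ×ˢ U q.2.1 ×ˢ U q.2.2 ⊆ S) {μ : Measure X}
    (hμ : μ = ν.withDensity fun z => c * ∑ p ∈ P, (U p).indicator 1 z) :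
    ∑ q ∈ Q, c * ν (U q.1) * (c * ν (U q.2.1) * (c * ν (U q.2.2))) ≤ μ.prod (μ.prod μ) S := by
  set f : X → ℝ≥0∞ := fun z => c * ∑ p ∈ P, (U p).indicator 1 z
  have hf : Measurable f := by fun_prop (disch := exact hU _)
  have hbox : ∀ q : ι × ι × ι, MeasurableSet (U q.1 ×ˢ U q.2.1 ×ˢ U q.2.2) :=
    fun q => (hU _).prod ((hU _).prod (hU _))
  calc ∑ q ∈ Q, c * ν (U q.1) * (c * ν (U q.2.1) * (c * ν (U q.2.2)))
      = ∑ q ∈ Q, ∫⁻ x in S, c ^ 3 * (U q.1 ×ˢ U q.2.1 ×ˢ U q.2.2).indicator 1 x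
          ∂ν.prod (ν.prod ν) := by
        refine Finset.sum_congr rfl fun q hq => ?_
        rw [lintegral_const_mul _ (measurable_one.indicator (hbox q)),
          lintegral_indicator_one (hbox q), Measure.restrict_apply (hbox q),
          inter_eq_left.2 (hS q hq), Measure.prod_prod, Measure.prod_prod]
        ring
    _ ≤ ∑ q ∈ P ×ˢ P ×ˢ P, ∫⁻ x in S, c ^ 3 * (U q.1 ×ˢ U q.2.1 ×ˢ U q.2.2).indicator 1 x
          ∂ν.prod (ν.prod ν) := Finset.sum_le_sum_of_subset hQ
    _ = ∫⁻ x in S, c ^ 3 * ∑ q ∈ P ×ˢ P ×ˢ P, (U q.1 ×ˢ U q.2.1 ×ˢ U q.2.2).indicator 1 x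
          ∂ν.prod (ν.prod ν) := by
        rw [← lintegral_finsetSum _ fun q _ => (measurable_one.indicator (hbox q)).const_mul _]
        simp only [Finset.mul_sum]
    _ = μ.prod (μ.prod μ) S := by
        rw [hμ, prod_withDensity hf hf,
          prod_withDensity hf (by fun_prop : Measurable fun z : X × X => f z.1 * f z.2),
          withDensity_apply' _ S]
        refine lintegral_congr fun x => ?_
        simp only [f]
        rw [← sum_indicator_one_mul_sum_indicator_one]
        ring

lemma ofReal_mul_volume_ball_fin_two_rpow {N : ℝ} (hN : 0 < N) (s : ℝ)
    (p : EuclideanSpace ℝ (Fin 2)) :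
    ENNReal.ofReal (N⁻¹ * N ^ (2 / s)) * volume (ball p (N ^ (-(1 / s)))) =
      ENNReal.ofReal (π / N) := by
  have hr := rpow_pos_of_pos hN (-(1 / s))
  have hr2 : N ^ (2 / s) * (N ^ (-(1 / s))) ^ 2 = 1 := by
    rw [← rpow_natCast, ← rpow_mul hN.le, ← rpow_add hN,
      show 2 / s + -(1 / s) * ((2 : ℕ) : ℝ) = 0 by push_cast; ring, rpow_zero]
  rw [EuclideanSpace.volume_ball_fin_two, ← ENNReal.ofReal_pow hr.le,
    ← ENNReal.ofReal_mul (pow_nonneg hr.le 2), ← ENNReal.ofReal_mul (by positivity)]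
  congr 1
  linear_combination π * N⁻¹ * hr2

lemma le_div_pow_mul_rpow_of_mul_div_pow_le {a b k N s : ℝ} (ha : 0 < a) (hN : 0 < N)
    (h : k * (a / N) ^ 3 ≤ b * (N ^ (-(1 / s))) ^ 3) :
    k ≤ b / a ^ 3 * N ^ (3 - 3 / s) := by
  have hr3 : N ^ (3 - 3 / s) = N ^ 3 * (N ^ (-(1 / s))) ^ 3 := by
    rw [← rpow_natCast, ← rpow_natCast (N ^ _), ← rpow_mul hN.le, ← rpow_add hN]
    congr 1
    push_cast
    ring
  calc k = k * (a / N) ^ 3 * (N / a) ^ 3 := by field_simp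
    _ ≤ b * (N ^ (-(1 / s))) ^ 3 * (N / a) ^ 3 := by gcongr
    _ = b / a ^ 3 * N ^ (3 - 3 / s) := by rw [hr3]; field_simp

theorem stmt_17 (s C : ℝ) (hs : 7 / 4 < s) (hC : 0 < C) :
    ∃ C' : ℝ, 0 < C' ∧
    ∀ (n : ℕ), 1 ≤ n →
    ∀ P : Finset (EuclideanSpace ℝ (Fin 2)), P.card = n →
    (↑P ⊆ {x : EuclideanSpace ℝ (Fin 2) | ∀ i, x i ∈ Set.Icc (0 : ℝ) 1}) →
    ∀ (μ : Measure (EuclideanSpace ℝ (Fin 2))),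
      μ = volume.withDensity (fun z => ENNReal.ofReal ((n : ℝ)⁻¹ * (n : ℝ) ^ (2 / s) *
            ∑ p ∈ P, Set.indicator (Metric.ball p ((n : ℝ) ^ (-(1 / s)))) (fun _ => (1 : ℝ)) z)) →
    (∀ (t₁₂ t₁₃ t₂₃ : ℝ) (ε : ℝ), ε ∈ Set.Ioc (0 : ℝ) 1 →
      (μ.prod (μ.prod μ))
        {x : EuclideanSpace ℝ (Fin 2) × EuclideanSpace ℝ (Fin 2) × EuclideanSpace ℝ (Fin 2) |
          (t₁₂ ≤ dist x.1 x.2.1 ∧ dist x.1 x.2.1 ≤ t₁₂ + ε) ∧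
          (t₁₃ ≤ dist x.1 x.2.2 ∧ dist x.1 x.2.2 ≤ t₁₃ + ε) ∧
          (t₂₃ ≤ dist x.2.1 x.2.2 ∧ dist x.2.1 x.2.2 ≤ t₂₃ + ε)}
        ≤ ENNReal.ofReal (C * ε ^ 3)) →
    ∀ t₁₂ t₁₃ t₂₃ : ℝ,
      (((P ×ˢ (P ×ˢ P)).filter (fun q =>
          (t₁₂ - (n : ℝ) ^ (-(1 / s)) ≤ dist q.1 q.2.1 ∧
            dist q.1 q.2.1 ≤ t₁₂ + (n : ℝ) ^ (-(1 / s))) ∧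
          (t₁₃ - (n : ℝ) ^ (-(1 / s)) ≤ dist q.1 q.2.2 ∧
            dist q.1 q.2.2 ≤ t₁₃ + (n : ℝ) ^ (-(1 / s))) ∧
          (t₂₃ - (n : ℝ) ^ (-(1 / s)) ≤ dist q.2.1 q.2.2 ∧
            dist q.2.1 q.2.2 ≤ t₂₃ + (n : ℝ) ^ (-(1 / s))))).card : ℝ)
        ≤ C' * (n : ℝ) ^ (3 - 3 / s) := by
  refine ⟨216 * C / π ^ 3, by positivity, ?_⟩
  intro n hn P _ _ μ hμ hbound t₁₂ t₁₃ t₂₃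
  set N : ℝ := (n : ℝ)
  set r := N ^ (-(1 / s))
  set Q := (P ×ˢ (P ×ˢ P)).filter fun q => sideLengths q ∈
    Icc (t₁₂ - r) (t₁₂ + r) ×ˢ Icc (t₁₃ - r) (t₁₃ + r) ×ˢ Icc (t₂₃ - r) (t₂₃ + r)
  set S := sideLengths (E := EuclideanSpace ℝ (Fin 2)) ⁻¹'
    (Icc (t₁₂ - 3 * r) (t₁₂ + 3 * r) ×ˢ Icc (t₁₃ - 3 * r) (t₁₃ + 3 * r) ×ˢ
      Icc (t₂₃ - 3 * r) (t₂₃ + 3 * r))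
  have hN : 0 < N := by positivity
  have hr : 0 < r := by positivity
  have hr1 : r ≤ 1 := rpow_le_one_of_one_le_of_nonpos (Nat.one_le_cast.2 hn)
    (neg_nonpos.2 (one_div_nonneg.2 (by linarith)))
  have hμ' : μ = volume.withDensity fun z =>
      ENNReal.ofReal (N⁻¹ * N ^ (2 / s)) * ∑ p ∈ P, (ball p r).indicator 1 z := by
    simp only [hμ, ofReal_mul_sum_indicator (by positivity : 0 ≤ N⁻¹ * N ^ (2 / s))]
  have hbox : ∀ q ∈ Q, ball q.1 r ×ˢ ball q.2.1 r ×ˢ ball q.2.2 r ⊆ S :=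
    fun q hq _ hx => sideLengths_mem_of_mem_ball (Finset.mem_filter.1 hq).2 hx
  have hlower : ∑ _q ∈ Q, ENNReal.ofReal (π / N) * (ENNReal.ofReal (π / N) * ENNReal.ofReal (π / N))
      ≤ μ.prod (μ.prod μ) S := by
    simpa only [r, ofReal_mul_volume_ball_fin_two_rpow hN] using
      sum_le_withDensity_prod_prod volume (U := fun p => ball p r)
        (fun _ => measurableSet_ball) _ P (Finset.filter_subset _ _) hbox hμ'
  have hupper : μ.prod (μ.prod μ) S ≤ (2 * 3) ^ 3 * ENNReal.ofReal (C * r ^ 3) := by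
    simpa only [Nat.cast_ofNat] using measure_preimage_Icc_prod_le (μ.prod (μ.prod μ))
      sideLengths hr (fun a b c => hbound a b c r ⟨hr, hr1⟩) (m := 3) (by norm_num) t₁₂ t₁₃ t₂₃
  refine le_div_pow_mul_rpow_of_mul_div_pow_le pi_pos hN ?_
  rw [← ENNReal.ofReal_le_ofReal_iff (by positivity)]
  calc ENNReal.ofReal (Q.card * (π / N) ^ 3)
      = ∑ _q ∈ Q, ENNReal.ofReal (π / N) * (ENNReal.ofReal (π / N) * ENNReal.ofReal (π / N)) := by
        rw [Finset.sum_const, nsmul_eq_mul, ENNReal.ofReal_mul (by positivity),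
          ENNReal.ofReal_natCast, ENNReal.ofReal_pow (by positivity)]
        ring
    _ ≤ (2 * 3) ^ 3 * ENNReal.ofReal (C * r ^ 3) := hlower.trans hupper
    _ = ENNReal.ofReal (216 * C * r ^ 3) := by
        rw [mul_assoc, ENNReal.ofReal_mul (by norm_num : (0 : ℝ) ≤ 216), ENNReal.ofReal_ofNat]
        norm_num
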